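/- Let k > 0, 0 < Δ < π, and 𝔫 ∈ ℝ. Define V̄(Δ) = (4/3)k^{1/2}(π−Δ)(2π−Δ)√(Δ/(4π−3Δ)) and F(Δ,𝔫) = −(4/3)·k^{1/2}/((4π−3Δ)^{3/2}√Δ) · [Δ(7Δ² − 18πΔ + 12π²) + 𝔫(−6Δ³ + 19πΔ² − 18π²Δ + 4π³)]. Then F(Δ,𝔫) = −(2/π)V̄(Δ) − (𝔫 − Δ/π)·V̄'(Δ), where V̄' is the derivative of V̄. -/

import Mathlib

open Real

noncomputable def VbarSPP (k : ℝ) (Δ : ℝ) : ℝ :=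
  (4 / 3) * Real.sqrt k * (π - Δ) * (2 * π - Δ) * Real.sqrt (Δ / (4 * π - 3 * Δ))

noncomputable def Fspp (k Δ 𝔫 : ℝ) : ℝ :=
  -(4 / 3) * Real.sqrt k / ((4 * π - 3 * Δ) ^ ((3 : ℝ) / 2) * Real.sqrt Δ) *
    (Δ * (7 * Δ ^ 2 - 18 * π * Δ + 12 * π ^ 2) +
      𝔫 * (-6 * Δ ^ 3 + 19 * π * Δ ^ 2 - 18 * π ^ 2 * Δ + 4 * π ^ 3))

theorem spp_index_theorem (k Δ 𝔫 : ℝ) (hk : 0 < k) (hΔ0 : 0 < Δ) (hΔπ : Δ < π) :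
    Fspp k Δ 𝔫 = -(2 / π) * VbarSPP k Δ - (𝔫 - Δ / π) * deriv (VbarSPP k) Δ := by
  have hb0 : 0 < 4 * π - 3 * Δ := by nlinarith [Real.pi_pos]
  set a := Real.sqrt Δ with ha_def
  set b := Real.sqrt (4 * π - 3 * Δ) with hb_def
  have ha : 0 < a := Real.sqrt_pos.mpr hΔ0
  have hb : 0 < b := Real.sqrt_pos.mpr hb0
  have ha2 : a ^ 2 = Δ := Real.sq_sqrt hΔ0.le
  have hb2 : b ^ 2 = 4 * π - 3 * Δ := Real.sq_sqrt hb0.le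
  set C := (4 / 3) * Real.sqrt k with hC_def
  -- pieces
  have h1 : HasDerivAt (fun x : ℝ => Real.sqrt x) (1 / (2 * a)) Δ :=
    Real.hasDerivAt_sqrt hΔ0.ne'
  have hlin : HasDerivAt (fun x : ℝ => 4 * π - 3 * x) (-3) Δ := by
    simpa using ((hasDerivAt_id Δ).const_mul (3:ℝ)).const_sub (4*π)
  have h2 : HasDerivAt (fun x : ℝ => Real.sqrt (4 * π - 3 * x)) (1 / (2 * b) * (-3)) Δ :=
    (Real.hasDerivAt_sqrt hb0.ne').comp Δ hlin
  have hq : HasDerivAt (fun x : ℝ => Real.sqrt x / Real.sqrt (4 * π - 3 * x))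
      ((1 / (2 * a) * b - a * (1 / (2 * b) * (-3))) / b ^ 2) Δ := h1.div h2 hb.ne'
  have hpp : HasDerivAt (fun x : ℝ => (π - x) * (2 * π - x))
      ((-1) * (2 * π - Δ) + (π - Δ) * (-1)) Δ :=
    (((hasDerivAt_id Δ).const_sub π)).mul ((hasDerivAt_id Δ).const_sub (2*π))
  have hmul := (hpp.mul hq).const_mul C
  have hD : HasDerivAt (fun x : ℝ => C * ((π - x) * (2 * π - x)
      * (Real.sqrt x / Real.sqrt (4 * π - 3 * x))))
      (C * ((2 * Δ - 3 * π) * (a / b)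
        + ((π - Δ) * (2 * π - Δ)) * (2 * π / (a * b ^ 3)))) Δ := by
    refine hmul.congr_deriv ?_
    rw [← ha_def, ← hb_def, show Δ = a ^ 2 from ha2.symm,
      show π = (b ^ 2 + 3 * a ^ 2) / 4 from by rw [ha2, hb2]; ring]
    have h4 : b ^ 2 + 3 * a ^ 2 ≠ 0 := by positivity
    field_simp
    ring
  have hDV : HasDerivAt (VbarSPP k)
      (C * ((2 * Δ - 3 * π) * (a / b)
        + ((π - Δ) * (2 * π - Δ)) * (2 * π / (a * b ^ 3)))) Δ := by
    refine HasDerivAt.congr_of_eventuallyEq hD ?_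
    have hmem : Set.Ioo (0:ℝ) π ∈ nhds Δ := Ioo_mem_nhds hΔ0 hΔπ
    filter_upwards [hmem] with x hx
    rw [VbarSPP, Real.sqrt_div hx.1.le]
    ring
  rw [hDV.deriv]
  have hrp : (4 * π - 3 * Δ) ^ ((3 : ℝ) / 2) = b ^ 3 := by
    rw [hb_def, show ((3:ℝ)/2) = (1/2) * (3:ℕ) by push_cast; ring,
      Real.rpow_mul hb0.le, Real.rpow_natCast, ← Real.sqrt_eq_rpow]
  have hV : VbarSPP k Δ = C * (π - Δ) * (2 * π - Δ) * (a / b) := by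
    rw [VbarSPP, Real.sqrt_div hΔ0.le, hC_def]
  rw [Fspp, hrp, hV]
  have hπ : π = (b ^ 2 + 3 * a ^ 2) / 4 := by rw [ha2, hb2]; ring
  have hΔa : Δ = a ^ 2 := ha2.symm
  rw [← ha_def, hΔa, hπ, hC_def]
  have h4 : b ^ 2 + 3 * a ^ 2 ≠ 0 := by positivity
  field_simp
  ring
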